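/- arXiv:2007.14451 — 2 statements merged into one kernel-verified Lean document; each statement's English description precedes it below -/
import Mathlib

section
/- Let c : {0,1}^n → {0,1}, let G : {0,1}^m → {0,1}^{n+1} be any map, and let D be the pushforward of the uniform distribution on {0,1}^m under G. Then the total variation distance satisfies d_TV(D, D_c) ≥ 1 − 2^{m−n} (as real numbers; the bound is vacuous when m ≥ n). -/
/-- The graph distribution `D_c` on `{0,1}^{n+1}` of a Boolean function
`c : {0,1}^n → {0,1}`: it assigns probability `2^{-n}` to each string `x‖c(x)`
and `0` otherwise. -/
noncomputable def boolGraphDist (n : ℕ) (c : (Fin n → Bool) → Bool) :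
    (Fin (n + 1) → Bool) → ℝ :=
  fun y => if ∃ x : Fin n → Bool, y = Fin.snoc x (c x) then (1 : ℝ) / 2 ^ n else 0

/-- The pushforward of the uniform distribution on `{0,1}^m` under
`G : {0,1}^m → {0,1}^{n+1}`. -/
noncomputable def pushUnif (n m : ℕ) (G : (Fin m → Bool) → (Fin (n + 1) → Bool)) :
    (Fin (n + 1) → Bool) → ℝ :=
  fun y => ((Finset.univ.filter fun x : Fin m → Bool => G x = y).card : ℝ) / 2 ^ m

/-- Total variation distance between distributions on a finite type. -/
noncomputable def tvDist {α : Type*} [Fintype α] (P Q : α → ℝ) : ℝ :=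
  (1 / 2) * ∑ y, |P y - Q y|

/-!
The pushforward `D` vanishes off the range `R` of `G`, which has at most `2^m` points, while
`D_c` gives each point mass at most `2^{-n}`, hence gives `Rᶜ` mass at least `1 - 2^m 2^{-n}`.
Since both are probability distributions, `d_TV(D, D_c) ≥ D_c(T) - D(T)` for every set `T`;
take `T = Rᶜ`.
-/

open Finset

lemma sum_sub_le_tvDist {α : Type*} [Fintype α] {P Q : α → ℝ} (hPQ : ∑ y, P y = ∑ y, Q y)
    (T : Finset α) : ∑ y ∈ T, (Q y - P y) ≤ tvDist P Q := by
  classical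
  have hcompl : ∑ y ∈ Tᶜ, (P y - Q y) = ∑ y ∈ T, (Q y - P y) := by
    have := sum_compl_add_sum T (fun y => P y - Q y)
    simp only [sum_sub_distrib] at this ⊢
    linarith
  have hT : ∑ y ∈ T, (Q y - P y) ≤ ∑ y ∈ T, |P y - Q y| :=
    sum_le_sum fun y _ => abs_sub_comm (P y) (Q y) ▸ le_abs_self _
  have hTc : ∑ y ∈ Tᶜ, (P y - Q y) ≤ ∑ y ∈ Tᶜ, |P y - Q y| :=
    sum_le_sum fun y _ => le_abs_self _
  rw [tvDist, ← sum_compl_add_sum T]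
  linarith

lemma one_sub_card_mul_le_tvDist {α : Type*} [Fintype α] [DecidableEq α] {P Q : α → ℝ}
    {R : Finset α} {q : ℝ} (hP : ∑ y, P y = 1) (hQ : ∑ y, Q y = 1)
    (hPR : ∀ y ∉ R, P y = 0) (hQq : ∀ y, Q y ≤ q) : 1 - #R * q ≤ tvDist P Q := by
  have hRc : ∑ y ∈ Rᶜ, (Q y - P y) = 1 - ∑ y ∈ R, Q y := by
    rw [sum_congr rfl fun y hy => by rw [hPR y (mem_compl.mp hy), sub_zero], ← hQ,
      ← sum_compl_add_sum R]
    ring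
  have hR : ∑ y ∈ R, Q y ≤ #R * q := by
    simpa using sum_le_card_nsmul R Q q fun y _ => hQq y
  calc 1 - #R * q ≤ ∑ y ∈ Rᶜ, (Q y - P y) := by linarith
    _ ≤ tvDist P Q := sum_sub_le_tvDist (hP.trans hQ.symm) _

lemma sum_pushUnif (n m : ℕ) (G : (Fin m → Bool) → (Fin (n + 1) → Bool)) :
    ∑ y, pushUnif n m G y = 1 := by
  classical
  have hfib : #(univ : Finset (Fin m → Bool)) = ∑ y, #{x | G x = y} :=
    card_eq_sum_card_fiberwise fun x _ => mem_univ (G x)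
  simp [pushUnif, ← sum_div, ← Nat.cast_sum, ← hfib]

lemma pushUnif_eq_zero_of_notMem_range {n m : ℕ} {G : (Fin m → Bool) → (Fin (n + 1) → Bool)}
    {y : Fin (n + 1) → Bool} (hy : y ∉ Set.range G) : pushUnif n m G y = 0 := by
  simp only [pushUnif, div_eq_zero_iff, Nat.cast_eq_zero, card_eq_zero, filter_eq_empty_iff]
  exact Or.inl fun x _ hx => hy ⟨x, hx⟩

lemma boolGraphDist_le (n : ℕ) (c : (Fin n → Bool) → Bool) (y : Fin (n + 1) → Bool) :
    boolGraphDist n c y ≤ 1 / 2 ^ n := by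
  unfold boolGraphDist
  split_ifs
  exacts [le_rfl, by positivity]

lemma sum_boolGraphDist (n : ℕ) (c : (Fin n → Bool) → Bool) :
    ∑ y, boolGraphDist n c y = 1 := by
  classical
  set f : (Fin n → Bool) → (Fin (n + 1) → Bool) := fun x => Fin.snoc x (c x)
  have hf : Function.Injective f := fun a b h => by
    simpa [f] using congrArg Fin.init h
  have hgraph : ({y | ∃ x, y = f x} : Finset _) = univ.image f := by
    ext y; simp [eq_comm]
  simp only [boolGraphDist, ← sum_filter]
  rw [sum_const, nsmul_eq_mul, hgraph, card_image_of_injective _ hf]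
  simp

theorem tvDist_pushUnif_ge (n m : ℕ) (c : (Fin n → Bool) → Bool)
    (G : (Fin m → Bool) → (Fin (n + 1) → Bool)) :
    1 - (2 : ℝ) ^ ((m : ℝ) - (n : ℝ)) ≤ tvDist (pushUnif n m G) (boolGraphDist n c) := by
  classical
  have hR : (#(univ.image G) : ℝ) ≤ 2 ^ m := by
    exact_mod_cast (card_image_le).trans (by simp)
  calc 1 - (2 : ℝ) ^ ((m : ℝ) - (n : ℝ)) = 1 - 2 ^ m * (1 / 2 ^ n) := by
        rw [Real.rpow_sub two_pos, Real.rpow_natCast, Real.rpow_natCast, mul_one_div]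
    _ ≤ 1 - #(univ.image G) * (1 / 2 ^ n) := by gcongr
    _ ≤ tvDist (pushUnif n m G) (boolGraphDist n c) :=
      one_sub_card_mul_le_tvDist (sum_pushUnif n m G) (sum_boolGraphDist n c)
        (fun y hy => pushUnif_eq_zero_of_notMem_range (by simpa using hy)) (boolGraphDist_le n c)
end

section
/- Let c : {0,1}^n → {0,1} and let G : {0,1}^m → {0,1}^{n+1}. Then G is an exact generator for D_c if and only if m ≥ n and there exists a permutation P : {0,1}^m → {0,1}^m such that G(x) = (P(x))_{[1,n]}‖c((P(x))_{[1,n]}) for all x ∈ {0,1}^m, where y_{[1,n]} denotes the first n bits of y. -/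
open Finset

lemma snoc_eq_iff_aux {n : ℕ} {a a' : Fin n → Bool} {b b' : Bool}
    (h : (Fin.snoc a b : Fin (n+1) → Bool) = Fin.snoc a' b') : a = a' := by
  have := congrArg Fin.init h; simpa [Fin.init_snoc] using this

noncomputable def truncFiberEquiv (n m : ℕ) (h : n ≤ m) (z : Fin n → Bool) :
    {x : Fin m → Bool // (fun i => x (Fin.castLE h i)) = z} ≃ (Fin (m - n) → Bool) where
  toFun x := fun j => x.1 ⟨n + j, by omega⟩
  invFun w := ⟨fun i => if h' : (i : ℕ) < n then z ⟨i, h'⟩ else w ⟨(i : ℕ) - n, by omega⟩, by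
    funext i
    simp only [Fin.castLE]
    rw [dif_pos i.2]⟩
  left_inv := by
    rintro ⟨x, hx⟩
    ext i
    simp only
    by_cases h' : (i : ℕ) < n
    · rw [dif_pos h']
      have := congrFun hx ⟨(i : ℕ), h'⟩
      simp only [Fin.castLE] at this
      rw [← this]
    · rw [dif_neg h']
      congr 1
      ext
      simp
      omega
  right_inv := by
    intro w
    funext j
    simp only
    rw [dif_neg (by omega)]
    congr 1
    ext
    simp

lemma card_trunc_fiber (n m : ℕ) (h : n ≤ m) (z : Fin n → Bool) :
    (Finset.univ.filter fun x : Fin m → Bool => (fun i => x (Fin.castLE h i)) = z).card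
      = 2 ^ (m - n) := by
  rw [← Fintype.card_subtype]
  rw [Fintype.card_congr (truncFiberEquiv n m h z)]
  simp

lemma exists_bij_of_fiber_card {α β : Type*} [Fintype α] [DecidableEq β] (f g : α → β)
    (h : ∀ b, Fintype.card {a // f a = b} = Fintype.card {a // g a = b}) :
    ∃ P : α → α, Function.Bijective P ∧ ∀ a, g (P a) = f a := by
  let e : ∀ b, {a // f a = b} ≃ {a // g a = b} := fun b => Fintype.equivOfCardEq (h b)
  let E : α ≃ α := (Equiv.sigmaFiberEquiv f).symm.trans
    ((Equiv.sigmaCongrRight e).trans (Equiv.sigmaFiberEquiv g))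
  refine ⟨E, E.bijective, fun a => ?_⟩
  show g ((Equiv.sigmaFiberEquiv g) ((Equiv.sigmaCongrRight e) ((Equiv.sigmaFiberEquiv f).symm a))) = f a
  exact (e (f a) ⟨a, rfl⟩).2

theorem exact_generator_iff_permuted_truncation (n m : ℕ)
    (c : (Fin n → Bool) → Bool)
    (G : (Fin m → Bool) → (Fin (n + 1) → Bool)) :
    pushUnif n m G = boolGraphDist n c ↔
      ∃ (hnm : n ≤ m) (P : (Fin m → Bool) → (Fin m → Bool)),
        Function.Bijective P ∧
        ∀ x : Fin m → Bool,
          G x = Fin.snoc (fun i : Fin n => P x (Fin.castLE hnm i))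
            (c fun i : Fin n => P x (Fin.castLE hnm i)) := by
  constructor
  · intro hG
    -- fiber size equation
    have key : ∀ z : Fin n → Bool,
        ((Finset.univ.filter fun x : Fin m → Bool => G x = Fin.snoc z (c z)).card) * 2 ^ n
          = 2 ^ m := by
      intro z
      have h0 := congrFun hG (Fin.snoc z (c z))
      simp only [pushUnif, boolGraphDist] at h0
      rw [if_pos ⟨z, rfl⟩] at h0
      rw [div_eq_div_iff (by positivity) (by positivity)] at h0
      have : ((Finset.univ.filter fun x : Fin m → Bool => G x = Fin.snoc z (c z)).card : ℝ)
          * 2 ^ n = 2 ^ m := by linarith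
      exact_mod_cast this
    -- n ≤ m
    have hnm : n ≤ m := by
      have hk := key (fun _ => false)
      set k := (Finset.univ.filter fun x : Fin m → Bool =>
        G x = Fin.snoc (fun _ => false) (c (fun _ => false))).card with hkdef
      have hkpos : 0 < k := by
        rcases Nat.eq_zero_or_pos k with h | h
        · rw [h] at hk; simp at hk
          exact absurd hk.symm (Nat.two_pow_pos m).ne'
        · exact h
      have h2 : 2 ^ n ≤ 2 ^ m := by
        calc 2 ^ n ≤ k * 2 ^ n := Nat.le_mul_of_pos_left _ hkpos
        _ = 2 ^ m := hk
      exact (Nat.pow_le_pow_iff_right (by norm_num)).1 h2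
    -- every G x is in the support
    have hrange : ∀ x : Fin m → Bool, ∃ z, G x = Fin.snoc z (c z) := by
      intro x
      by_contra hcon
      have h0 := congrFun hG (G x)
      simp only [pushUnif, boolGraphDist] at h0
      rw [if_neg (by simpa using hcon)] at h0
      rw [div_eq_zero_iff] at h0
      rcases h0 with h0 | h0
      · have hx : x ∈ Finset.univ.filter fun x' : Fin m → Bool => G x' = G x := by simp
        have hpos := Finset.card_pos.2 ⟨x, hx⟩
        have hne : ((Finset.univ.filter fun x' : Fin m → Bool => G x' = G x).card : ℝ) ≠ 0 := by
          exact_mod_cast hpos.ne'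
        exact hne h0
      · exact absurd h0 (by positivity)
    set f : (Fin m → Bool) → (Fin n → Bool) := fun x => Fin.init (G x) with hf
    have hGf : ∀ x, G x = Fin.snoc (f x) (c (f x)) := by
      intro x
      obtain ⟨z, hz⟩ := hrange x
      rw [hz]
      have : f x = z := by rw [hf]; simp only [hz, Fin.init_snoc]
      rw [this]
    -- fiber cards of f equal those of truncation
    have hfib : ∀ z : Fin n → Bool,
        Fintype.card {x : Fin m → Bool // f x = z}
          = Fintype.card {x : Fin m → Bool // (fun i => x (Fin.castLE hnm i)) = z} := by
      intro z
      rw [Fintype.card_subtype, Fintype.card_subtype, card_trunc_fiber n m hnm z]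
      have hset : (Finset.univ.filter fun x : Fin m → Bool => f x = z)
          = Finset.univ.filter fun x : Fin m → Bool => G x = Fin.snoc z (c z) := by
        ext x
        simp only [Finset.mem_filter, Finset.mem_univ, true_and]
        constructor
        · intro h; rw [hGf x, h]
        · intro h
          have := snoc_eq_iff_aux ((hGf x).symm.trans h)
          exact this
      rw [hset]
      have hk := key z
      have h2m : 2 ^ m = 2 ^ (m - n) * 2 ^ n := by
        rw [← pow_add, Nat.sub_add_cancel hnm]
      rw [h2m] at hk
      exact Nat.eq_of_mul_eq_mul_right (by positivity) hk
    obtain ⟨P, hbij, hP⟩ := exists_bij_of_fiber_card f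
      (fun x : Fin m → Bool => fun i => x (Fin.castLE hnm i)) hfib
    refine ⟨hnm, P, hbij, fun x => ?_⟩
    have ht : (fun i : Fin n => P x (Fin.castLE hnm i)) = f x := hP x
    rw [ht]
    exact hGf x
  · rintro ⟨hnm, P, hbij, hP⟩
    funext y
    simp only [pushUnif, boolGraphDist]
    by_cases hy : ∃ z : Fin n → Bool, y = Fin.snoc z (c z)
    · rw [if_pos hy]
      obtain ⟨z, rfl⟩ := hy
      have hset : (Finset.univ.filter fun x : Fin m → Bool => G x = Fin.snoc z (c z))
          = Finset.univ.filter fun x : Fin m → Bool =>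
              (fun i => P x (Fin.castLE hnm i)) = z := by
        ext x
        simp only [Finset.mem_filter, Finset.mem_univ, true_and]
        constructor
        · intro h
          exact snoc_eq_iff_aux ((hP x).symm.trans h)
        · intro h
          rw [hP x, h]
      rw [hset]
      have hcard : (Finset.univ.filter fun x : Fin m → Bool =>
          (fun i => P x (Fin.castLE hnm i)) = z).card
            = (Finset.univ.filter fun x : Fin m → Bool =>
              (fun i => x (Fin.castLE hnm i)) = z).card := by
        apply Finset.card_bij (fun x _ => P x)
        · intro a ha
          simp only [Finset.mem_filter, Finset.mem_univ, true_and] at ha ⊢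
          exact ha
        · intro a _ b _ hab
          exact hbij.1 hab
        · intro b hb
          obtain ⟨a, rfl⟩ := hbij.2 b
          simp only [Finset.mem_filter, Finset.mem_univ, true_and] at hb
          exact ⟨a, by simp [hb], rfl⟩
      rw [hcard, card_trunc_fiber n m hnm z]
      rw [div_eq_div_iff (by positivity) (by positivity)]
      push_cast
      rw [← pow_add, Nat.sub_add_cancel hnm]
      ring
    · rw [if_neg hy]
      have hempty : (Finset.univ.filter fun x : Fin m → Bool => G x = y) = ∅ := by
        apply Finset.filter_false_of_mem
        intro x _ hx
        exact hy ⟨_, (hx.symm.trans (hP x))⟩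
      rw [hempty]
      simp
end
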